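/- Let Δ = {(η₁,η₂,η₃) ∈ ℝ³ : ηᵢ > 0, η₁ + η₂ + η₃ < 1} and define ψ : Δ → ℝ by ψ(η) = ¼(η₁ ln η₁ + η₂ ln η₂ + η₃ ln η₃ + η₄ ln η₄) where η₄ = 1 − η₁ − η₂ − η₃. Then ∇ψ(η) = ¼(ln(η₁/η₄), ln(η₂/η₄), ln(η₃/η₄)), and the dual Hessian potential satisfies ⟨∇ψ(η), η⟩ − ψ(η) = −¼ ln(1 − η₁ − η₂ − η₃) for all η ∈ Δ. (These are the dual Hessian coordinates and dual Hessian potential of the generic system (S3) on the round 3-sphere; in particular this Hessian structure is not self-dual.) -/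

import Mathlib

open Real Set

/-- The Hessian potential of the generic system (S3) on the round 3-sphere
in its Hessian coordinates, defined on the open simplex `Δ ⊆ ℝ³`; here
`η₄ = 1 − η₁ − η₂ − η₃`. -/
noncomputable def ψ (a b c : ℝ) : ℝ :=
  (a * log a + b * log b + c * log c
    + (1 - a - b - c) * log (1 - a - b - c)) / 4

/-- Partial derivative with respect to the first variable. -/
noncomputable def d1 (f : ℝ → ℝ → ℝ → ℝ) (a b c : ℝ) : ℝ := deriv (fun s => f s b c) a

/-- Partial derivative with respect to the second variable. -/
noncomputable def d2 (f : ℝ → ℝ → ℝ → ℝ) (a b c : ℝ) : ℝ := deriv (fun s => f a s c) b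

/-- Partial derivative with respect to the third variable. -/
noncomputable def d3 (f : ℝ → ℝ → ℝ → ℝ) (a b c : ℝ) : ℝ := deriv (fun s => f a b s) c

/-! Along each coordinate axis, `4ψ` is `s log s + (D - s) log (D - s)` plus a constant, whose
derivative is `log s - log (D - s)`; since `ψ` is symmetric in `η₁, η₂, η₃` it suffices to
differentiate in `η₁`. The value of the dual potential is then the identity
`∑ ηᵢ (log ηᵢ - log η₄) - ∑ ηᵢ log ηᵢ - η₄ log η₄ = -(η₁ + η₂ + η₃ + η₄) log η₄ = -log η₄`. -/

lemma hasDerivAt_mul_log_add_sub_mul_log {D x : ℝ} (hx : x ≠ 0) (hDx : D - x ≠ 0) :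
    HasDerivAt (fun s => s * log s + (D - s) * log (D - s)) (log x - log (D - x)) x := by
  have hsub : HasDerivAt (fun s : ℝ => D - s) (-1) x := (hasDerivAt_id x).const_sub D
  have hcomp : HasDerivAt (fun s => (D - s) * log (D - s)) ((log (D - x) + 1) * -1) x :=
    (hasDerivAt_mul_log hDx).comp x hsub
  exact ((hasDerivAt_mul_log hx).add hcomp).congr_deriv (by ring)

lemma ψ_comm_fst_snd (a b c : ℝ) : ψ a b c = ψ b a c := by
  rw [ψ, ψ, show 1 - b - a - c = 1 - a - b - c by ring]; ring

lemma ψ_comm_fst_thd (a b c : ℝ) : ψ a b c = ψ c b a := by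
  rw [ψ, ψ, show 1 - c - b - a = 1 - a - b - c by ring]; ring

lemma hasDerivAt_ψ_fst {a b c : ℝ} (ha : a ≠ 0) (hd : 1 - a - b - c ≠ 0) :
    HasDerivAt (fun s => ψ s b c) ((log a - log (1 - a - b - c)) / 4) a := by
  have hD : 1 - b - c - a = 1 - a - b - c := by ring
  have hψ : (fun s => ψ s b c) = fun s =>
      (s * log s + (1 - b - c - s) * log (1 - b - c - s) + (b * log b + c * log c)) / 4 := by
    funext s
    rw [ψ, show 1 - s - b - c = 1 - b - c - s by ring]
    ring
  rw [hψ, ← hD]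
  exact ((hasDerivAt_mul_log_add_sub_mul_log ha (hD ▸ hd)).add_const _).div_const 4

lemma d1_ψ {a b c : ℝ} (ha : a ≠ 0) (hd : 1 - a - b - c ≠ 0) :
    d1 ψ a b c = (log a - log (1 - a - b - c)) / 4 :=
  (hasDerivAt_ψ_fst ha hd).deriv

lemma d2_ψ {a b c : ℝ} (hb : b ≠ 0) (hd : 1 - a - b - c ≠ 0) :
    d2 ψ a b c = (log b - log (1 - a - b - c)) / 4 := by
  have hd' : 1 - b - a - c = 1 - a - b - c := by ring
  simp only [d2, ψ_comm_fst_snd a _ c]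
  rw [← hd']
  exact d1_ψ hb (hd' ▸ hd)

lemma d3_ψ {a b c : ℝ} (hc : c ≠ 0) (hd : 1 - a - b - c ≠ 0) :
    d3 ψ a b c = (log c - log (1 - a - b - c)) / 4 := by
  have hd' : 1 - c - b - a = 1 - a - b - c := by ring
  simp only [d3, ψ_comm_fst_thd a b]
  rw [← hd']
  exact d1_ψ hc (hd' ▸ hd)

/-- For the generic system (S3), with `η₄ = 1 − η₁ − η₂ − η₃`: the gradient of
`ψ` (the dual Hessian coordinates) is
`∇ψ(η) = ¼(ln(η₁/η₄), ln(η₂/η₄), ln(η₃/η₄))`, and the dual Hessian potential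
is `⟨∇ψ(η), η⟩ − ψ(η) = −¼ ln(1 − η₁ − η₂ − η₃)` on the open simplex. -/
theorem s3_dual_coordinates_and_potential :
    ∀ a b c : ℝ, 0 < a → 0 < b → 0 < c → a + b + c < 1 →
      d1 ψ a b c = (1 / 4) * log (a / (1 - a - b - c)) ∧
      d2 ψ a b c = (1 / 4) * log (b / (1 - a - b - c)) ∧
      d3 ψ a b c = (1 / 4) * log (c / (1 - a - b - c)) ∧
      d1 ψ a b c * a + d2 ψ a b c * b + d3 ψ a b c * c - ψ a b c
        = -(1 / 4) * log (1 - a - b - c) := by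
  intro a b c ha hb hc habc
  have hd : 1 - a - b - c ≠ 0 := by linarith
  rw [d1_ψ ha.ne' hd, d2_ψ hb.ne' hd, d3_ψ hc.ne' hd, log_div ha.ne' hd, log_div hb.ne' hd,
    log_div hc.ne' hd]
  refine ⟨by ring, by ring, by ring, ?_⟩
  unfold ψ
  ring
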